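/- Let ε, τ, β > 0, a > 0 (with a = [Λ(1−M)]^{j−1}), and define h(k²) = (ε/τ)·k⁴ + q·k² + a/τ where q = (2(1+ξ²) − χβ)/(2τ) and ξ = √(a·ε). If χ = χ_c = 2(1+ξ)²/β, then the minimum of h over k² > 0 is zero and is attained at k_c² = ξ/ε. -/

import Mathlib

/-! At χ = χ_c the middle coefficient of h is -2ξ/τ, and since ξ² = aε the quadratic is the
perfect square (ε/τ)(k² - ξ/ε)², which is nonnegative and vanishes exactly at k² = ξ/ε. -/

theorem mul_sq_sub_two_mul_add_eq_mul_sq_of_sq_eq {ε a ξ : ℝ} (hε : ε ≠ 0)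
    (hξ : ξ ^ 2 = a * ε) (k : ℝ) : ε * k ^ 2 - 2 * ξ * k + a = ε * (k - ξ / ε) ^ 2 := by
  field_simp
  linear_combination -hξ

theorem stmt5 (ε τ β a χ ξ : ℝ) (hε : 0 < ε) (hτ : 0 < τ) (hβ : 0 < β) (ha : 0 < a)
    (hξ : ξ = Real.sqrt (a * ε)) (hχ : χ = 2 * (1 + ξ)^2 / β)
    (h : ℝ → ℝ)
    (hh : ∀ k2, h k2 = (ε / τ) * k2^2 + ((2 * (1 + ξ^2) - χ * β) / (2 * τ)) * k2 + a / τ) :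
    h (ξ / ε) = 0 ∧ ∀ k2 > 0, 0 ≤ h k2 := by
  have hξ2 : ξ ^ 2 = a * ε := by
    rw [hξ, Real.sq_sqrt (by positivity)]
  have hχβ : χ * β = 2 * (1 + ξ) ^ 2 := by
    rw [hχ, div_mul_cancel₀ _ hβ.ne']
  have h_eq_sq : ∀ k2, h k2 = ε * (k2 - ξ / ε) ^ 2 / τ := fun k2 => by
    rw [hh, hχβ, ← mul_sq_sub_two_mul_add_eq_mul_sq_of_sq_eq hε.ne' hξ2]
    ring
  exact ⟨by simp [h_eq_sq], fun k2 _ => by rw [h_eq_sq]; positivity⟩
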